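/- arXiv:1311.0682 — 2 statements merged into one kernel-verified Lean document; each statement's English description precedes it below -/
import Mathlib

section
/- There is a bijection α from the disjoint union of A-shadows of genus g with m arcs over two backbones and B-shadows of genus g-1 with m arcs over two backbones, onto the disjoint union of marked shadows over one backbone of genus g with m arcs and marked d-shadows of genus g with m arcs. -/
def IsMatching {m : ℕ} (π : Equiv.Perm (Fin m)) : Prop :=
  ∀ i, π i ≠ i ∧ π (π i) = i

def Crosses {m : ℕ} (π : Equiv.Perm (Fin m)) (i j : Fin m) : Prop :=
  (min i (π i) < min j (π j) ∧ min j (π j) < max i (π i) ∧ max i (π i) < max j (π j)) ∨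
  (min j (π j) < min i (π i) ∧ min i (π i) < max j (π j) ∧ max j (π j) < max i (π i))

def NoLoneArcs {m : ℕ} (π : Equiv.Perm (Fin m)) : Prop :=
  ∀ i, ∃ j, Crosses π i j

def StackPair {m : ℕ} (π : Equiv.Perm (Fin m)) (i j : Fin m) : Prop :=
  (j : ℕ) = (i : ℕ) + 1 ∧ (π j : ℕ) + 1 = (π i : ℕ) ∧ (i : ℕ) < (π j : ℕ)

def NoStacks {m : ℕ} (π : Equiv.Perm (Fin m)) : Prop :=
  ∀ i j, ¬ StackPair π i j

def IsShadow {m : ℕ} (π : Equiv.Perm (Fin m)) : Prop :=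
  IsMatching π ∧ NoLoneArcs π ∧ NoStacks π

def Irred {m : ℕ} (π : Equiv.Perm (Fin m)) : Prop :=
  ∀ i j : Fin m, Relation.ReflTransGen (Crosses π) i j

noncomputable def numCycles {m : ℕ} (σ : Equiv.Perm (Fin m)) : ℕ :=
  Nat.card (Quotient (MulAction.orbitRel (Subgroup.zpowers σ) (Fin m)))

def HasGenus (n : ℕ) (π : Equiv.Perm (Fin (2*n))) (g : ℕ) : Prop :=
  n + 1 = 2*g + max 1 (numCycles (finRotate (2*n) * π))

def lastV (n : ℕ) (c : Fin (2*n)) : Fin (2*n) :=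
  ⟨2*n - 1, Nat.sub_lt c.pos Nat.one_pos⟩

noncomputable def twoRotate (n : ℕ) (c : Fin (2*n)) : Equiv.Perm (Fin (2*n)) :=
  finRotate (2*n) * Equiv.swap c (lastV n c)

def HasGenus2 (n : ℕ) (c : Fin (2*n)) (π : Equiv.Perm (Fin (2*n))) (g : ℕ) : Prop :=
  n = 2*g + numCycles (twoRotate n c * π)

def NoStacks2 {n : ℕ} (π : Equiv.Perm (Fin (2*n))) (c : Fin (2*n)) : Prop :=
  ∀ i j, StackPair π i j → (i : ℕ) = (c : ℕ) ∨ (π j : ℕ) = (c : ℕ)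

def IsShadow2 {n : ℕ} (π : Equiv.Perm (Fin (2*n))) (c : Fin (2*n)) : Prop :=
  IsMatching π ∧ NoLoneArcs π ∧ NoStacks2 π c

def TypeA (n : ℕ) (c : Fin (2*n)) (π : Equiv.Perm (Fin (2*n))) : Prop :=
  (twoRotate n c * π).SameCycle (π c) (π (lastV n c))

def HasExtArc {n : ℕ} (c : Fin (2*n)) (π : Equiv.Perm (Fin (2*n))) : Prop :=
  ∃ i : Fin (2*n), (i : ℕ) ≤ (c : ℕ) ∧ (c : ℕ) < (π i : ℕ)

/-- `A`-shadow over two backbones: both backbones on one boundary component. -/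
def AShadow (n : ℕ) (c : Fin (2 * n)) (π : Equiv.Perm (Fin (2 * n))) (g : ℕ) : Prop :=
  (c : ℕ) + 1 < 2 * n ∧ IsShadow2 π c ∧ TypeA n c π ∧ HasGenus2 n c π g

/-- `B`-shadow over two backbones: the backbones lie on different boundary components. -/
def BShadow (n : ℕ) (c : Fin (2 * n)) (π : Equiv.Perm (Fin (2 * n))) (g : ℕ) : Prop :=
  (c : ℕ) + 1 < 2 * n ∧ IsShadow2 π c ∧ ¬ TypeA n c π ∧ HasGenus2 n c π g

/-- A marked shadow over one backbone: a shadow together with a marked cut point. -/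
def MarkedShadow (m : ℕ) (k : Fin (2 * m)) (π : Equiv.Perm (Fin (2 * m))) (g : ℕ) : Prop :=
  (k : ℕ) + 1 < 2 * m ∧ IsShadow π ∧ HasGenus m π g

/-- A `d`-shadow: a matching all of whose arcs cross some other arc, having exactly one
stack pair (i.e. obtained from a shadow by inflating one arc into a stack of size two). -/
def IsDShadow {m : ℕ} (π : Equiv.Perm (Fin (2 * m))) : Prop :=
  IsMatching π ∧ NoLoneArcs π ∧ ∃! p : Fin (2 * m) × Fin (2 * m), StackPair π p.1 p.2

/-- A marked `d`-shadow: a `d`-shadow with a mark at one of the two cut points of its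
unique stack of size two. -/
def MarkedDShadow (m : ℕ) (k : Fin (2 * m)) (π : Equiv.Perm (Fin (2 * m))) (g : ℕ) : Prop :=
  IsDShadow π ∧ HasGenus m π g ∧
    ∃ i j : Fin (2 * m), StackPair π i j ∧ (k = i ∨ (k : ℕ) = (π j : ℕ))

/-!
A diagram over two backbones is stored as the data `(c, π)` of the one-backbone diagram obtained
by gluing at the cut `c`, so `α` is the identity on `(c, π)`, and the claim is that the two sides
are cut out by the same conditions on `(c, π)`.

Genus: the boundary permutation of the glued diagram is
`finRotate * π = (twoRotate c * π) * swap (π c) (π last)`, and multiplying a permutation by a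
transposition splits the cycle through its two points, or merges the two cycles through them.
For an `A`-shadow `π c` and `π last` lie on one boundary component, which splits, so the genus is
kept; for a `B`-shadow two components merge and the genus goes up by one.

Stacks: a shadow over two backbones may only have stacks of size two whose outer arc starts at the
cut or whose inner arc ends there, and the two kinds cannot coexist, so there is at most one. With
none the glued diagram is a marked shadow, with one it is a `d`-shadow marked at that stack.
-/

namespace Equiv.Perm

variable {α : Type*} {f : Perm α} {a b : α}

theorem pow_mod_apply_of_pow_apply_eq_self {x : α} {k : ℕ} (h : (f ^ k) x = x) (i : ℕ) :
    (f ^ (i % k)) x = (f ^ i) x := by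
  conv_rhs => rw [← Nat.mod_add_div i k, pow_add, pow_mul, mul_apply,
    pow_apply_eq_self_of_apply_eq_self h]

theorem SameCycle.rel_of_forall_rel_apply {r : Setoid α} (h : ∀ x, r x (f x)) {x y : α}
    (hxy : f.SameCycle x y) : r x y := by
  obtain ⟨k, rfl⟩ := hxy
  induction k using Int.induction_on with
  | zero => exact r.refl x
  | succ k ih =>
    have hk := h ((f ^ (k : ℤ)) x)
    rw [← mul_apply, ← zpow_one_add, add_comm] at hk
    exact r.trans ih hk
  | pred k ih =>
    have hk := h ((f ^ (-(k : ℤ) - 1)) x)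
    rw [← mul_apply, ← zpow_one_add, add_sub_cancel] at hk
    exact r.trans ih (r.symm hk)

def sameCycleJoin (f : Perm α) (a b : α) : Setoid α where
  r x y := f.SameCycle x y ∨ (f.SameCycle x a ∧ f.SameCycle y b) ∨
    (f.SameCycle x b ∧ f.SameCycle y a)
  iseqv := ⟨fun _ => .inl .rfl, by grind [SameCycle.symm],
    by grind [SameCycle.trans, SameCycle.symm]⟩

theorem sameCycleJoin_eq_of_sameCycle (h : f.SameCycle a b) :
    sameCycleJoin f a b = SameCycle.setoid f := by
  refine Setoid.ext fun x y => ⟨?_, .inl⟩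
  rintro (hxy | ⟨hxa, hyb⟩ | ⟨hxb, hya⟩)
  exacts [hxy, hxa.trans (h.trans hyb.symm), hxb.trans (h.symm.trans hya.symm)]

theorem card_quotient_sameCycle_eq_card_sameCycleJoin_add_one [Finite α]
    (h : ¬ f.SameCycle a b) :
    Nat.card (Quotient (SameCycle.setoid f)) = Nat.card (Quotient (sameCycleJoin f a b)) + 1 := by
  classical
  let B : Quotient (SameCycle.setoid f) := ⟦b⟧
  let F (q : {q // q ≠ B}) : Quotient (sameCycleJoin f a b) :=
    Quotient.map' id (fun _ _ => .inl) q.1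
  have hF : F.Bijective := by
    constructor
    · rintro ⟨q₁, h₁⟩ ⟨q₂, h₂⟩ hq
      induction q₁ using Quotient.ind
      induction q₂ using Quotient.ind
      refine Subtype.ext (Quotient.sound ?_)
      obtain hxy | ⟨-, hyb⟩ | ⟨hxb, -⟩ := Quotient.exact hq
      exacts [hxy, absurd (Quotient.sound hyb) h₂, absurd (Quotient.sound hxb) h₁]
    · rintro ⟨x⟩
      by_cases hxb : f.SameCycle x b
      · exact ⟨⟨⟦a⟧, fun hab => h (Quotient.exact hab)⟩,
          Quotient.sound (.inr (.inl ⟨.rfl, hxb⟩))⟩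
      · exact ⟨⟨⟦x⟧, fun hxb' => hxb (Quotient.exact hxb')⟩, rfl⟩
  rw [← Nat.card_congr (Equiv.optionSubtypeNe B), Finite.card_option,
    Nat.card_congr (.ofBijective F hF)]

variable [DecidableEq α]

theorem mul_swap_pow_apply_left {k : ℕ} (hk : 1 ≤ k)
    (h : ∀ j, 1 ≤ j → j < k → (f ^ j) b ≠ a ∧ (f ^ j) b ≠ b) :
    ((f * swap a b) ^ k) a = (f ^ k) b := by
  induction k, hk using Nat.le_induction with
  | base => simp
  | succ k hk ih =>
    obtain ⟨hna, hnb⟩ := h k hk k.lt_succ_self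
    rw [pow_succ', mul_apply, ih fun j hj hjk => h j hj (by omega), pow_succ', mul_apply,
      mul_apply, swap_apply_of_ne_of_ne hna hnb]

theorem sameCycle_mul_swap_iff [Finite α] (hab : a ≠ b) :
    (f * swap a b).SameCycle a b ↔ ¬ f.SameCycle a b := by
  classical
  have hex : ∃ k, 1 ≤ k ∧ ((f ^ k) b = a ∨ (f ^ k) b = b) :=
    ⟨orderOf f, orderOf_pos f, Or.inr (by rw [pow_orderOf_eq_one, one_apply])⟩
  set k := Nat.find hex
  obtain ⟨hk, hfirst⟩ : 1 ≤ k ∧ ((f ^ k) b = a ∨ (f ^ k) b = b) := Nat.find_spec hex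
  have hmiss : ∀ j, 1 ≤ j → j < k → (f ^ j) b ≠ a ∧ (f ^ j) b ≠ b := fun j hj hjk => by
    simpa [not_or, hj] using Nat.find_min hex hjk
  -- `f * swap a b` runs from `a` through `f b, f² b, …` until the `f`-orbit of `b` first meets
  -- `{a, b}`: meeting `a` closes a cycle avoiding `b`, meeting `b` joins `a` to `b`.
  have hτk := mul_swap_pow_apply_left hk hmiss
  rcases hfirst with hka | hkb
  · refine iff_of_false ?_ (not_not.2 (SameCycle.symm ⟨k, by simpa using hka⟩))
    intro hτ
    obtain ⟨i, -, hi⟩ := hτ.exists_pow_eq'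
    rw [← pow_mod_apply_of_pow_apply_eq_self (hτk.trans hka)] at hi
    have hlt : i % k < k := Nat.mod_lt _ hk
    rcases Nat.eq_zero_or_pos (i % k) with h0 | hpos
    · exact hab (by simpa [h0] using hi)
    · exact (hmiss _ hpos hlt).2 ((mul_swap_pow_apply_left hpos
        fun j hj hji => hmiss j hj (hji.trans hlt)).symm.trans hi)
  · refine iff_of_true ⟨k, by simpa using hτk.trans hkb⟩ ?_
    intro hf
    obtain ⟨i, -, hi⟩ := hf.symm.exists_pow_eq'
    rw [← pow_mod_apply_of_pow_apply_eq_self hkb] at hi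
    rcases Nat.eq_zero_or_pos (i % k) with h0 | hpos
    · exact hab (by simpa [h0] using hi.symm)
    · exact (hmiss _ hpos (Nat.mod_lt _ hk)).1 hi

theorem sameCycleJoin_mul_swap_le : sameCycleJoin (f * swap a b) a b ≤ sameCycleJoin f a b := by
  set J := sameCycleJoin f a b
  have key {x y : α} (hxy : (f * swap a b).SameCycle x y) : J x y := by
    refine hxy.rel_of_forall_rel_apply fun z => ?_
    rw [mul_apply]
    by_cases hza : z = a
    · subst hza; exact .inr (.inl ⟨.rfl, by rw [swap_apply_left, sameCycle_apply_left]⟩)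
    by_cases hzb : z = b
    · subst hzb; exact .inr (.inr ⟨.rfl, by rw [swap_apply_right, sameCycle_apply_left]⟩)
    · rw [swap_apply_of_ne_of_ne hza hzb]; exact .inl ⟨1, rfl⟩
  have hab : J a b := .inr (.inl ⟨.rfl, .rfl⟩)
  rintro x y (hxy | ⟨hxa, hyb⟩ | ⟨hxb, hya⟩)
  exacts [key hxy, J.trans (key hxa) (J.trans hab (J.symm (key hyb))),
    J.trans (key hxb) (J.trans (J.symm hab) (J.symm (key hya)))]

theorem sameCycleJoin_mul_swap : sameCycleJoin (f * swap a b) a b = sameCycleJoin f a b := by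
  refine le_antisymm sameCycleJoin_mul_swap_le ?_
  simpa only [mul_swap_mul_self] using
    sameCycleJoin_mul_swap_le (f := f * swap a b) (a := a) (b := b)

theorem card_quotient_sameCycle_mul_swap [Finite α] (hab : a ≠ b) (h : f.SameCycle a b) :
    Nat.card (Quotient (SameCycle.setoid (f * swap a b))) =
      Nat.card (Quotient (SameCycle.setoid f)) + 1 := by
  rw [card_quotient_sameCycle_eq_card_sameCycleJoin_add_one
    ((sameCycle_mul_swap_iff hab).not.2 (not_not.2 h)), sameCycleJoin_mul_swap,
    sameCycleJoin_eq_of_sameCycle h]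

end Equiv.Perm

open Equiv Equiv.Perm

theorem numCycles_eq_card_quotient_sameCycle {N : ℕ} (σ : Perm (Fin N)) :
    numCycles σ = Nat.card (Quotient (SameCycle.setoid σ)) :=
  Nat.card_congr <| Quotient.congrRight fun _ _ => by
    rw [MulAction.orbitRel_apply, MulAction.mem_orbit_iff, Subgroup.exists_zpowers]
    exact sameCycle_comm

theorem numCycles_mul_swap_of_sameCycle {N : ℕ} {σ : Perm (Fin N)} {a b : Fin N} (hab : a ≠ b)
    (h : σ.SameCycle a b) : numCycles (σ * swap a b) = numCycles σ + 1 := by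
  simp only [numCycles_eq_card_quotient_sameCycle, card_quotient_sameCycle_mul_swap hab h]

theorem numCycles_mul_swap_of_not_sameCycle {N : ℕ} {σ : Perm (Fin N)} {a b : Fin N}
    (hab : a ≠ b) (h : ¬ σ.SameCycle a b) : numCycles σ = numCycles (σ * swap a b) + 1 := by
  simpa only [mul_swap_mul_self] using
    numCycles_mul_swap_of_sameCycle hab ((sameCycle_mul_swap_iff hab).2 h)

theorem one_le_numCycles {N : ℕ} (σ : Perm (Fin N)) (x : Fin N) : 1 ≤ numCycles σ := by
  have : Nonempty (Quotient (SameCycle.setoid σ)) := ⟨⟦x⟧⟩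
  rw [numCycles_eq_card_quotient_sameCycle]
  exact Nat.card_pos

theorem IsMatching.mul_self {N : ℕ} {π : Perm (Fin N)} (hπ : IsMatching π) : π * π = 1 :=
  Equiv.ext fun i => (hπ i).2

theorem IsMatching.finRotate_mul {m : ℕ} {π : Perm (Fin (2 * m))} (hπ : IsMatching π)
    (c : Fin (2 * m)) :
    finRotate (2 * m) * π = twoRotate m c * π * swap (π c) (π (lastV m c)) := by
  rw [twoRotate, swap_apply_apply, inv_eq_of_mul_eq_one_right hπ.mul_self]
  simp only [mul_assoc]
  rw [← mul_assoc π π, hπ.mul_self, one_mul, swap_mul_self_mul]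

theorem ne_lastV {m : ℕ} {c : Fin (2 * m)} (hc : (c : ℕ) + 1 < 2 * m) : c ≠ lastV m c :=
  fun h => by have := congrArg Fin.val h; simp only [lastV] at this; omega

theorem hasGenus_iff_of_typeA {m g : ℕ} {c : Fin (2 * m)} {π : Perm (Fin (2 * m))}
    (hc : (c : ℕ) + 1 < 2 * m) (hπ : IsMatching π) (hA : TypeA m c π) :
    HasGenus m π g ↔ HasGenus2 m c π g := by
  have hcyc := numCycles_mul_swap_of_sameCycle (π.injective.ne (ne_lastV hc)) hA
  rw [← hπ.finRotate_mul] at hcyc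
  rw [HasGenus, HasGenus2, max_eq_right (one_le_numCycles _ c)]
  omega

theorem hasGenus_iff_of_not_typeA {m g : ℕ} (hg : 1 ≤ g) {c : Fin (2 * m)}
    {π : Perm (Fin (2 * m))} (hc : (c : ℕ) + 1 < 2 * m) (hπ : IsMatching π)
    (hA : ¬ TypeA m c π) : HasGenus m π g ↔ HasGenus2 m c π (g - 1) := by
  have hcyc := numCycles_mul_swap_of_not_sameCycle (π.injective.ne (ne_lastV hc)) hA
  rw [← hπ.finRotate_mul] at hcyc
  rw [HasGenus, HasGenus2, max_eq_right (one_le_numCycles _ c)]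
  omega

theorem aShadow_or_bShadow_iff {m g : ℕ} (hg : 1 ≤ g) {c : Fin (2 * m)}
    {π : Perm (Fin (2 * m))} :
    AShadow m c π g ∨ BShadow m c π (g - 1) ↔
      (c : ℕ) + 1 < 2 * m ∧ IsShadow2 π c ∧ HasGenus m π g := by
  by_cases hA : TypeA m c π
  · simp only [AShadow, BShadow, hA, not_true_eq_false, true_and, false_and, and_false,
      or_false]
    exact and_congr_right fun hc => and_congr_right fun hs =>
      (hasGenus_iff_of_typeA hc hs.1 hA).symm
  · simp only [AShadow, BShadow, hA, not_false_eq_true, true_and, false_and, and_false, false_or]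
    exact and_congr_right fun hc => and_congr_right fun hs =>
      (hasGenus_iff_of_not_typeA hg hc hs.1 hA).symm

theorem StackPair.add_one_lt {n : ℕ} {π : Perm (Fin n)} {i j k : Fin n} (h : StackPair π i j)
    (hk : k = i ∨ (k : ℕ) = π j) : (k : ℕ) + 1 < n := by
  obtain ⟨hj, hπj, -⟩ := h
  rcases hk with rfl | hk <;> omega

theorem StackPair.fst_ne_apply_snd {n : ℕ} {π : Perm (Fin n)} (hπ : IsMatching π)
    {i₁ j₁ i₂ j₂ : Fin n} (h₁ : StackPair π i₁ j₁) (h₂ : StackPair π i₂ j₂) :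
    (i₁ : ℕ) ≠ π j₂ := by
  intro heq
  obtain ⟨hj₁, -, hlt₁⟩ := h₁
  obtain ⟨-, hπ₂, hlt₂⟩ := h₂
  have hi₂ : i₂ = π j₁ := by rw [← (hπ i₂).2, show π i₂ = j₁ from Fin.ext (by omega)]
  have := congrArg Fin.val hi₂
  omega

theorem NoStacks2.stackPair_eq {n : ℕ} {π : Perm (Fin (2 * n))} {c : Fin (2 * n)}
    (hns : NoStacks2 π c) (hπ : IsMatching π) {i₁ j₁ i₂ j₂ : Fin (2 * n)}
    (h₁ : StackPair π i₁ j₁) (h₂ : StackPair π i₂ j₂) : (i₁, j₁) = (i₂, j₂) := by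
  have hj₁ := h₁.1
  have hj₂ := h₂.1
  rcases hns _ _ h₁ with e₁ | e₁ <;> rcases hns _ _ h₂ with e₂ | e₂
  · have : i₁ = i₂ := Fin.ext (e₁.trans e₂.symm)
    subst this
    rw [Fin.ext (hj₁.trans hj₂.symm)]
  · exact absurd (e₁.trans e₂.symm) (h₁.fst_ne_apply_snd hπ h₂)
  · exact absurd (e₂.trans e₁.symm) (h₂.fst_ne_apply_snd hπ h₁)
  · have : j₁ = j₂ := π.injective (Fin.ext (e₁.trans e₂.symm))
    subst this
    rw [Fin.ext (show (i₁ : ℕ) = i₂ by omega)]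

theorem markedShadow_or_markedDShadow_iff {m g : ℕ} {c : Fin (2 * m)}
    {π : Perm (Fin (2 * m))} :
    MarkedShadow m c π g ∨ MarkedDShadow m c π g ↔
      (c : ℕ) + 1 < 2 * m ∧ IsShadow2 π c ∧ HasGenus m π g := by
  constructor
  · rintro (⟨hc, ⟨hπ, hl, hns⟩, hg⟩ | ⟨⟨hπ, hl, hu⟩, hg, i, j, hij, hmark⟩)
    · exact ⟨hc, ⟨hπ, hl, fun i j h => (hns i j h).elim⟩, hg⟩
    refine ⟨hij.add_one_lt hmark, ⟨hπ, hl, fun i' j' h' => ?_⟩, hg⟩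
    obtain ⟨rfl, rfl⟩ := Prod.ext_iff.1 (hu.unique (y₁ := (i', j')) (y₂ := (i, j)) h' hij)
    exact hmark.imp (fun h => congrArg Fin.val h.symm) Eq.symm
  · rintro ⟨hc, ⟨hπ, hl, hns⟩, hg⟩
    by_cases hst : NoStacks π
    · exact .inl ⟨hc, ⟨hπ, hl, hst⟩, hg⟩
    obtain ⟨i, j, hij⟩ : ∃ i j, StackPair π i j := by simpa [NoStacks] using hst
    refine .inr ⟨⟨hπ, hl, (i, j), hij, fun p hp => hns.stackPair_eq hπ hp hij⟩, hg, i, j, hij,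
      (hns i j hij).imp (fun h => Fin.ext h.symm) Eq.symm⟩

/-- There is a bijection `α` from the disjoint union of `A`-shadows of genus `g` with `m`
arcs over two backbones and `B`-shadows of genus `g - 1` with `m` arcs over two backbones,
onto the disjoint union of marked shadows over one backbone of genus `g` with `m` arcs and
marked `d`-shadows of genus `g` with `m` arcs. -/
theorem glue_bijection (g m : ℕ) (hg : 1 ≤ g) :
    Nonempty
      (({p : Fin (2 * m) × Equiv.Perm (Fin (2 * m)) // AShadow m p.1 p.2 g} ⊕
        {p : Fin (2 * m) × Equiv.Perm (Fin (2 * m)) // BShadow m p.1 p.2 (g - 1)}) ≃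
       ({q : Fin (2 * m) × Equiv.Perm (Fin (2 * m)) // MarkedShadow m q.1 q.2 g} ⊕
        {q : Fin (2 * m) × Equiv.Perm (Fin (2 * m)) // MarkedDShadow m q.1 q.2 g})) := by
  classical
  have hAB : Disjoint (fun p : Fin (2 * m) × Perm (Fin (2 * m)) => AShadow m p.1 p.2 g)
      (fun p => BShadow m p.1 p.2 (g - 1)) :=
    Pi.disjoint_iff.2 fun _ => Prop.disjoint_iff.2 fun ⟨⟨_, _, hA, _⟩, ⟨_, _, hnA, _⟩⟩ => hnA hA
  have hMD : Disjoint (fun q : Fin (2 * m) × Perm (Fin (2 * m)) => MarkedShadow m q.1 q.2 g)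
      (fun q => MarkedDShadow m q.1 q.2 g) :=
    Pi.disjoint_iff.2 fun _ => Prop.disjoint_iff.2
      fun ⟨⟨_, ⟨_, _, hns⟩, _⟩, ⟨⟨_, _, p, hp, _⟩, _⟩⟩ => hns p.1 p.2 hp
  exact ⟨(subtypeOrEquiv _ _ hAB).symm.trans <|
    (subtypeEquivRight fun _ =>
      (aShadow_or_bShadow_iff hg).trans markedShadow_or_markedDShadow_iff.symm).trans
    (subtypeOrEquiv _ _ hMD)⟩
end

section
/- A shadow of genus g ≥ 1 over two backbones contains at least 2g+1 and at most 6(g+1)-2 arcs; a shadow of genus 0 over two backbones has at least 2 and at most 4 arcs. In particular, for fixed g there are only finitely many shadows of genus g over two backbones. -/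
/-!
Write `σ = twoRotate n c * π`, so that `n = 2g + r` with `r` the number of cycles of `σ`.
Since `r ≥ 1`, `n ≥ 2g + 1`; and two crossing arcs already need four vertices, so `n ≥ 2`.
For the upper bound, `σ x = π x + 1` whenever `π x` is neither `c` nor the last vertex.
Hence a fixed point of `σ` avoiding these two is an arc `(i, i + 1)`, which crosses nothing,
and such a 2-cycle is a stack. So all but at most two cycles of `σ` have length at least
three, whence `3r ≤ 2n + 4` and `n ≤ 6g + 4`.
-/

open Equiv Finset MulAction

namespace Equiv.Perm

variable {α : Type*} {σ : Perm α}

theorem SameCycle.orbitRel_mk_eq {x y : α} (h : σ.SameCycle x y) :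
    (⟦x⟧ : orbitRel.Quotient (Subgroup.zpowers σ) α) = ⟦y⟧ := by
  obtain ⟨i, rfl⟩ := h
  exact (orbitRel.Quotient.quotient_smul_eq
    (g := (⟨σ ^ i, Subgroup.zpow_mem_zpowers σ i⟩ : Subgroup.zpowers σ))).symm

theorem three_le_card_of_apply_apply_ne [DecidableEq α] {s : Finset α} {x : α}
    (hx : σ (σ x) ≠ x) (h₀ : x ∈ s) (h₁ : σ x ∈ s) (h₂ : σ (σ x) ∈ s) : 3 ≤ #s := by
  have hx₁ : σ x ≠ x := fun h => hx (by rw [h, h])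
  have hx₂ : σ (σ x) ≠ σ x := fun h => hx₁ (σ.injective h)
  exact two_lt_card.2 ⟨x, h₀, σ x, h₁, σ (σ x), h₂, hx₁.symm, hx.symm, hx₂.symm⟩

theorem three_mul_card_orbitRel_quotient_le [Fintype α] (B : Finset α)
    (hB : ∀ x, σ (σ x) = x → ∃ b ∈ B, σ.SameCycle x b) :
    3 * Nat.card (orbitRel.Quotient (Subgroup.zpowers σ) α) ≤ Fintype.card α + 2 * #B := by
  classical
  set Q := orbitRel.Quotient (Subgroup.zpowers σ) α
  let mk : α → Q := Quotient.mk _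
  have hfiber (ω : Q) : 3 ≤ #{x | mk x = ω} + 2 * if ω ∈ B.image mk then 1 else 0 := by
    obtain ⟨x, rfl⟩ : ∃ x, mk x = ω := Quotient.exists_rep ω
    split_ifs with hω
    · have : 0 < #{y | mk y = mk x} := card_pos.2 ⟨x, by simp⟩
      omega
    · have hx : σ (σ x) ≠ x := fun h => by
        obtain ⟨b, hb, hxb⟩ := hB x h
        exact hω (mem_image.2 ⟨b, hb, hxb.orbitRel_mk_eq.symm⟩)
      have hmk (y : α) : mk (σ y) = mk y :=
        (sameCycle_apply_left.2 (SameCycle.refl σ y)).orbitRel_mk_eq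
      have := three_le_card_of_apply_apply_ne (s := {y | mk y = mk x}) hx (by simp)
        (by simp [hmk]) (by simp [hmk])
      omega
  calc 3 * Nat.card Q = ∑ _ω : Q, 3 := by simp [Nat.card_eq_fintype_card, mul_comm]
    _ ≤ ∑ ω : Q, (#{x | mk x = ω} + 2 * if ω ∈ B.image mk then 1 else 0) :=
      sum_le_sum fun ω _ => hfiber ω
    _ = Fintype.card α + 2 * #(B.image mk) := by
      rw [sum_add_distrib, ← mul_sum, sum_boole, Nat.cast_id,
        ← card_eq_sum_card_fiberwise (by simp), card_univ, filter_univ_mem]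
    _ ≤ Fintype.card α + 2 * #B := by grw [card_image_le]

end Equiv.Perm

theorem numCycles_pos {m : ℕ} (σ : Perm (Fin m)) (hm : 0 < m) : 0 < numCycles σ := by
  have : Nonempty (orbitRel.Quotient (Subgroup.zpowers σ) (Fin m)) := ⟨⟦⟨0, hm⟩⟧⟩
  exact Nat.card_pos

theorem not_crosses_of_val_apply_add_one_eq {m : ℕ} {π : Perm (Fin m)} {i : Fin m}
    (hi : (π i : ℕ) + 1 = i) (j : Fin m) : ¬ Crosses π i j := by
  simp only [Crosses, Fin.lt_def, Fin.coe_min, Fin.coe_max]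
  omega

theorem four_le_of_noLoneArcs {m : ℕ} {π : Perm (Fin m)} (hm : 0 < m) (hπ : NoLoneArcs π) :
    4 ≤ m := by
  obtain ⟨j, hj⟩ := hπ ⟨0, hm⟩
  have := (max j (π j)).is_lt
  simp only [Crosses, Fin.lt_def, Fin.coe_min, Fin.coe_max] at hj this
  omega

theorem stackPair_of_val_eq_apply_add_one {m : ℕ} {π : Perm (Fin m)} (hπ : IsMatching π)
    {x y : Fin m} (hxy : (x : ℕ) < y) (hx : (x : ℕ) = π y + 1) (hy : (y : ℕ) = π x + 1) :
    StackPair π (π y) x := by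
  refine ⟨hx, ?_, by omega⟩
  rw [(hπ y).2]
  omega

section TwoBackbones

variable {n : ℕ} {c : Fin (2 * n)}

theorem val_add_one_lt_of_ne_lastV {y : Fin (2 * n)} (hy : y ≠ lastV n c) :
    (y : ℕ) + 1 < 2 * n := by
  have : (y : ℕ) ≠ 2 * n - 1 := fun h => hy (Fin.ext h)
  omega

theorem val_twoRotate_of_ne {y : Fin (2 * n)} (hyc : y ≠ c) (hyL : y ≠ lastV n c) :
    (twoRotate n c y : ℕ) = y + 1 := by
  rw [twoRotate, Perm.mul_apply, swap_apply_of_ne_of_ne hyc hyL, finRotate_apply,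
    Fin.val_add_one_of_lt' (val_add_one_lt_of_ne_lastV hyL)]

variable {π : Perm (Fin (2 * n))}

theorem IsShadow2.exists_sameCycle_of_apply_apply_eq (hπ : IsShadow2 π c) {x : Fin (2 * n)}
    (hx : (twoRotate n c * π) ((twoRotate n c * π) x) = x) :
    ∃ b ∈ ({π c, π (lastV n c)} : Finset _), (twoRotate n c * π).SameCycle x b := by
  obtain ⟨hmatch, hlone, hstack⟩ := hπ
  set σ := twoRotate n c * π
  by_contra! h
  have hne (z : Fin (2 * n)) (hz : σ.SameCycle x z) : π z ≠ c ∧ π z ≠ lastV n c := by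
    constructor <;> rintro hpz <;> exact h _ (by simp [← hpz, (hmatch z).2]) hz
  have hσ (z : Fin (2 * n)) (hz : σ.SameCycle x z) : (σ z : ℕ) = π z + 1 :=
    val_twoRotate_of_ne (hne z hz).1 (hne z hz).2
  have hxy : σ.SameCycle x (σ x) := Perm.sameCycle_apply_right.2 (.refl _ _)
  have hy : (σ x : ℕ) = π x + 1 := hσ x (.refl _ _)
  have hx' : (x : ℕ) = π (σ x) + 1 := by rw [← hσ _ hxy, hx]
  rcases lt_trichotomy (x : ℕ) (σ x) with hlt | heq | hgt
  · rcases hstack _ _ (stackPair_of_val_eq_apply_add_one hmatch hlt hx' hy) with h' | h'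
    · exact (hne _ hxy).1 (Fin.ext h')
    · exact (hne _ (.refl _ _)).1 (Fin.ext h')
  · obtain ⟨j, hj⟩ := hlone x
    exact not_crosses_of_val_apply_add_one_eq (by omega) j hj
  · rcases hstack _ _ (stackPair_of_val_eq_apply_add_one hmatch hgt hy hx') with h' | h'
    · exact (hne _ (.refl _ _)).1 (Fin.ext h')
    · exact (hne _ hxy).1 (Fin.ext h')

theorem IsShadow2.three_mul_numCycles_le (hπ : IsShadow2 π c) :
    3 * numCycles (twoRotate n c * π) ≤ 2 * n + 4 := by
  have hcount := Perm.three_mul_card_orbitRel_quotient_le _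
    fun x hx => hπ.exists_sameCycle_of_apply_apply_eq hx
  have hB : #({π c, π (lastV n c)} : Finset _) ≤ 2 := card_le_two
  rw [Fintype.card_fin] at hcount
  exact hcount.trans (by omega)

theorem IsShadow2.arc_bounds {g : ℕ} (hπ : IsShadow2 π c) (hg : HasGenus2 n c π g) :
    2 * g + 1 ≤ n ∧ 2 ≤ n ∧ n ≤ 6 * g + 4 := by
  have hn : 0 < 2 * n := c.pos
  have hcycles := numCycles_pos (twoRotate n c * π) hn
  have hfour := four_le_of_noLoneArcs hn hπ.2.1
  have hupper := hπ.three_mul_numCycles_le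
  unfold HasGenus2 at hg
  omega

end TwoBackbones

/-- A shadow of genus `g ≥ 1` over two backbones contains at least `2g + 1` and at most
`6(g+1) - 2` arcs; a shadow of genus `0` over two backbones has at least `2` and at most
`4` arcs. In particular, for fixed `g` there are only finitely many shadows of genus `g`
over two backbones. -/
theorem two_backbone_shadow_bounds :
    (∀ (n : ℕ) (c : Fin (2 * n)) (π : Equiv.Perm (Fin (2 * n))) (g : ℕ),
      (c : ℕ) + 1 < 2 * n → IsShadow2 π c → HasGenus2 n c π g →
        (1 ≤ g → 2 * g + 1 ≤ n ∧ n ≤ 6 * (g + 1) - 2) ∧ (g = 0 → 2 ≤ n ∧ n ≤ 4)) ∧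
    (∀ g : ℕ,
      {p : Σ n : ℕ, Fin (2 * n) × Equiv.Perm (Fin (2 * n)) |
        (p.2.1 : ℕ) + 1 < 2 * p.1 ∧ IsShadow2 p.2.2 p.2.1 ∧
          HasGenus2 p.1 p.2.1 p.2.2 g}.Finite) := by
  refine ⟨fun n c π g _ hπ hg => ?_, fun g => ?_⟩
  · have := hπ.arc_bounds hg
    constructor <;> intro <;> omega
  · refine ((Set.finite_Iic (6 * g + 4)).biUnion
      fun n _ => Set.finite_range (Sigma.mk n)).subset ?_
    rintro ⟨n, c, π⟩ ⟨-, hπ, hg⟩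
    exact Set.mem_biUnion (Set.mem_Iic.2 (hπ.arc_bounds hg).2.2) ⟨(c, π), rfl⟩
end
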